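/- arXiv:0704.2123 — 3 statements merged into one kernel-verified Lean document; each statement's English description precedes it below -/
import Mathlib

section
/- Let σ = −1, n ∈ ℕ, 0 < c < n, w > 0, and μ₀ ∈ ℝ with |μ₀| < w. Then the function φ(ξ) = √(2(n²−c²)/(3n²−c²)) · √(w² − μ₀²) / (√(w + μ₀) cosh(√(w² − μ₀²) ξ) − i √(w − μ₀) sinh(√(w² − μ₀²) ξ)) solves the ODE i φ'(ξ) = w φ̄(ξ) − μ₀ φ(ξ) − ((3n² − c²)/(n² − c²)) |φ(ξ)|² φ(ξ), and φ(ξ) → 0 exponentially as |ξ| → ∞. -/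
/-!
Write `a = √(w + μ₀)` and `b = √(w - μ₀)`, so that `γ = a b`, and `φ = K / D` with
`D ξ = a cosh (γ ξ) - i b sinh (γ ξ)` and `K = A γ`, where `k A² = 2` for the cubic
coefficient `k`. Since `|φ|² φ = K³ / (D² D̄)`, the ODE for `φ` is equivalent, after clearing
denominators, to the polynomial identity `-i D' D̄ = w D² - μ₀ D D̄ - 2 γ²`, which follows from
`cosh² - sinh² = 1`. Decay comes from `‖D ξ‖ ≥ Re D ξ = a cosh (γ ξ) ≥ a e^{γ|ξ|} / 2`.
-/

open Complex ComplexConjugate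

theorem I_mul_deriv_const_div {D : ℝ → ℂ} {D' : ℂ} {ξ : ℝ} {w μ k K : ℝ}
    (hD : HasDerivAt D D' ξ) (h0 : D ξ ≠ 0)
    (hid : -I * D' * conj (D ξ) = w * D ξ ^ 2 - μ * (D ξ * conj (D ξ)) - k * K ^ 2) :
    I * deriv (fun x => (K : ℂ) / D x) ξ =
      (w : ℂ) * conj ((K : ℂ) / D ξ) - (μ : ℂ) * ((K : ℂ) / D ξ) -
        (k : ℂ) * ((‖(K : ℂ) / D ξ‖ ^ 2 : ℝ) : ℂ) * ((K : ℂ) / D ξ) := by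
  have hc0 : conj (D ξ) ≠ 0 := (map_ne_zero _).mpr h0
  have hquot : HasDerivAt (fun x => (K : ℂ) / D x) ((0 * D ξ - K * D') / D ξ ^ 2) ξ :=
    (hasDerivAt_const ξ (K : ℂ)).div hD h0
  rw [hquot.deriv, ofReal_pow, ← mul_conj', map_div₀, conj_ofReal]
  field_simp
  linear_combination (K : ℂ) * hid

namespace GapSoliton

noncomputable def denom (a b γ ξ : ℝ) : ℂ :=
  ((a * Real.cosh (γ * ξ) : ℝ) : ℂ) - I * ((b * Real.sinh (γ * ξ) : ℝ) : ℂ)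

variable {a b γ : ℝ}

theorem denom_re (ξ : ℝ) : (denom a b γ ξ).re = a * Real.cosh (γ * ξ) := by
  simp only [denom, sub_re, ofReal_re, mul_re, I_re, I_im, ofReal_im]
  ring

theorem denom_ne_zero (ha : a ≠ 0) (ξ : ℝ) : denom a b γ ξ ≠ 0 := fun h => by
  have := denom_re (a := a) (b := b) (γ := γ) ξ
  rw [h, zero_re, eq_comm] at this
  exact mul_ne_zero ha (Real.cosh_pos _).ne' this

theorem conj_denom (ξ : ℝ) : conj (denom a b γ ξ) =
    ((a * Real.cosh (γ * ξ) : ℝ) : ℂ) + I * ((b * Real.sinh (γ * ξ) : ℝ) : ℂ) := by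
  simp only [denom, map_sub, map_mul, conj_ofReal, conj_I]
  ring

theorem hasDerivAt_denom (ξ : ℝ) : HasDerivAt (denom a b γ)
    (γ * (((a * Real.sinh (γ * ξ) : ℝ) : ℂ) - I * ((b * Real.cosh (γ * ξ) : ℝ) : ℂ))) ξ := by
  have hlin : HasDerivAt (fun x : ℝ => γ * x) γ ξ := by
    simpa using (hasDerivAt_id ξ).const_mul γ
  have hcosh := (((Real.hasDerivAt_cosh _).comp ξ hlin).const_mul a).ofReal_comp
  have hsinh := (((Real.hasDerivAt_sinh _).comp ξ hlin).const_mul b).ofReal_comp.const_mul I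
  exact (hcosh.sub hsinh).congr_deriv (by push_cast; ring)

theorem norm_denom_ge (ha : 0 < a) (hγ : 0 ≤ γ) (ξ : ℝ) :
    a * Real.exp (γ * |ξ|) / 2 ≤ ‖denom a b γ ξ‖ := by
  have hcosh : Real.exp (γ * |ξ|) / 2 ≤ Real.cosh (γ * ξ) := by
    rw [← Real.cosh_abs, abs_mul, abs_of_nonneg hγ, Real.cosh_eq]
    linarith [Real.exp_pos (-(γ * |ξ|))]
  calc a * Real.exp (γ * |ξ|) / 2 ≤ a * Real.cosh (γ * ξ) := by
        rw [mul_div_assoc]; exact mul_le_mul_of_nonneg_left hcosh ha.le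
    _ = (denom a b γ ξ).re := (denom_re ξ).symm
    _ ≤ ‖denom a b γ ξ‖ := re_le_norm _

theorem norm_div_denom_le (K : ℂ) (ha : 0 < a) (hγ : 0 ≤ γ) (ξ : ℝ) :
    ‖K / denom a b γ ξ‖ ≤ 2 * ‖K‖ / a * Real.exp (-γ * |ξ|) := by
  have hpos : 0 < a * Real.exp (γ * |ξ|) / 2 := by positivity
  calc ‖K / denom a b γ ξ‖ ≤ ‖K‖ / (a * Real.exp (γ * |ξ|) / 2) := by
        rw [norm_div]
        exact div_le_div_of_nonneg_left (norm_nonneg K) hpos (norm_denom_ge ha hγ ξ)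
    _ = 2 * ‖K‖ / a * Real.exp (-γ * |ξ|) := by
        rw [neg_mul, Real.exp_neg]
        field_simp

theorem denom_identity {w μ : ℝ} (ha : a ^ 2 = w + μ) (hb : b ^ 2 = w - μ) (hab : a * b = γ)
    (ξ : ℝ) :
    -I * (γ * (((a * Real.sinh (γ * ξ) : ℝ) : ℂ) - I * ((b * Real.cosh (γ * ξ) : ℝ) : ℂ))) *
        conj (denom a b γ ξ) =
      w * denom a b γ ξ ^ 2 - μ * (denom a b γ ξ * conj (denom a b γ ξ)) - 2 * γ ^ 2 := by
  rw [conj_denom, denom]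
  have hCS := Real.cosh_sq_sub_sinh_sq (γ * ξ)
  generalize Real.cosh (γ * ξ) = C, Real.sinh (γ * ξ) = S at hCS ⊢
  have hCS' : (C : ℂ) ^ 2 - (S : ℂ) ^ 2 = 1 := by exact_mod_cast hCS
  have ha' : (a : ℂ) ^ 2 = w + μ := by exact_mod_cast ha
  have hb' : (b : ℂ) ^ 2 = w - μ := by exact_mod_cast hb
  have hab' : (a : ℂ) * b = γ := by exact_mod_cast hab
  push_cast
  -- cofactors reducing the difference modulo `a² - w - μ`, `b² - w + μ`, `ab - γ`,
  -- `C² - S² - 1` and `I² + 1`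
  linear_combination (-I * γ * S * C - (w - μ) * C ^ 2 + b ^ 2 * (C ^ 2 - S ^ 2)) * ha'
    + (-I * γ * S * C + (w + μ) * S ^ 2 + (w + μ) * (C ^ 2 - S ^ 2)) * hb'
    + (2 * I * w * C * S + γ * (S ^ 2 - C ^ 2) - (γ + a * b) * (C ^ 2 - S ^ 2)) * hab'
    - 2 * γ ^ 2 * hCS'
    + (γ * a * b * (C ^ 2 - S ^ 2) + I * γ * b ^ 2 * C * S - (w + μ) * b ^ 2 * S ^ 2) * I_sq

end GapSoliton

open GapSoliton in
theorem stmt_8_general (n : ℕ) (c : ℝ) (hc1 : 0 < c) (hc2 : c < n)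
    (w μ₀ : ℝ) (hμ : |μ₀| < w)
    (γ : ℝ) (hγ : γ = Real.sqrt (w^2 - μ₀^2))
    (φ : ℝ → ℂ)
    (hφ : ∀ ξ : ℝ, φ ξ =
      (Real.sqrt (2 * ((n : ℝ)^2 - c^2) / (3 * (n : ℝ)^2 - c^2)) : ℂ) * (γ : ℂ) /
        ((Real.sqrt (w + μ₀) * Real.cosh (γ * ξ) : ℝ) -
          I * (Real.sqrt (w - μ₀) * Real.sinh (γ * ξ) : ℝ))) :
    (∀ ξ : ℝ, I * deriv φ ξ =
      (w : ℂ) * (starRingEnd ℂ) (φ ξ) - (μ₀ : ℂ) * φ ξ -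
        (((3 * (n : ℝ)^2 - c^2) / ((n : ℝ)^2 - c^2) : ℝ) : ℂ) *
          ((‖φ ξ‖^2 : ℝ) : ℂ) * φ ξ) ∧
    (∃ C : ℝ, 0 < C ∧ ∀ ξ : ℝ, ‖φ ξ‖ ≤ C * Real.exp (-γ * |ξ|)) := by
  obtain ⟨hμl, hμr⟩ := abs_lt.mp hμ
  set a := Real.sqrt (w + μ₀)
  set b := Real.sqrt (w - μ₀)
  set A := Real.sqrt (2 * ((n : ℝ)^2 - c^2) / (3 * (n : ℝ)^2 - c^2))
  set k := (3 * (n : ℝ)^2 - c^2) / ((n : ℝ)^2 - c^2)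
  have ha : a ^ 2 = w + μ₀ := Real.sq_sqrt (by linarith)
  have hb : b ^ 2 = w - μ₀ := Real.sq_sqrt (by linarith)
  have hab : a * b = γ := by rw [hγ, ← Real.sqrt_mul (by linarith)]; ring_nf
  have ha0 : 0 < a := Real.sqrt_pos.mpr (by linarith)
  have hγ0 : 0 < γ := hγ ▸ Real.sqrt_pos.mpr (by nlinarith)
  have hnc : 0 < (n : ℝ) ^ 2 - c ^ 2 := by nlinarith
  have hnc3 : 0 < 3 * (n : ℝ) ^ 2 - c ^ 2 := by nlinarith
  have hA0 : 0 < A := Real.sqrt_pos.mpr (by positivity)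
  have hkA : k * A ^ 2 = 2 := by
    rw [Real.sq_sqrt (by positivity), div_mul_div_comm]
    field_simp
  have hφ_eq : φ = fun ξ => ((A * γ : ℝ) : ℂ) / denom a b γ ξ := by
    ext1 ξ; rw [hφ, denom, ← ofReal_mul]
  subst hφ_eq
  have hK : 0 < ‖((A * γ : ℝ) : ℂ)‖ :=
    norm_pos_iff.mpr (ofReal_ne_zero.mpr (by positivity))
  refine ⟨fun ξ => I_mul_deriv_const_div (hasDerivAt_denom ξ) (denom_ne_zero ha0.ne' ξ) ?_,
    2 * ‖((A * γ : ℝ) : ℂ)‖ / a, by positivity, norm_div_denom_le _ ha0 hγ0.le⟩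
  have hkK : (k : ℂ) * ((A * γ : ℝ) : ℂ) ^ 2 = 2 * γ ^ 2 := by
    rw [← ofReal_pow, ← ofReal_mul, mul_pow, ← mul_assoc, hkA]; push_cast; ring
  rw [hkK]
  exact denom_identity ha hb hab ξ

theorem stmt_8 (n : ℕ) (c : ℝ) (hc1 : 0 < c) (hc2 : c < n)
    (w μ₀ : ℝ) (hw : 0 < w) (hμ : |μ₀| < w)
    (γ : ℝ) (hγ : γ = Real.sqrt (w^2 - μ₀^2))
    (φ : ℝ → ℂ)
    (hφ : ∀ ξ : ℝ, φ ξ =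
      (Real.sqrt (2 * ((n : ℝ)^2 - c^2) / (3 * (n : ℝ)^2 - c^2)) : ℂ) * (γ : ℂ) /
        ((Real.sqrt (w + μ₀) * Real.cosh (γ * ξ) : ℝ) -
          I * (Real.sqrt (w - μ₀) * Real.sinh (γ * ξ) : ℝ))) :
    (∀ ξ : ℝ, I * deriv φ ξ =
      (w : ℂ) * (starRingEnd ℂ) (φ ξ) - (μ₀ : ℂ) * φ ξ -
        (((3 * (n : ℝ)^2 - c^2) / ((n : ℝ)^2 - c^2) : ℝ) : ℂ) *
          ((‖φ ξ‖^2 : ℝ) : ℂ) * φ ξ) ∧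
    (∃ C : ℝ, 0 < C ∧ ∀ ξ : ℝ, ‖φ ξ‖ ≤ C * Real.exp (-γ * |ξ|)) :=
  stmt_8_general n c hc1 hc2 w μ₀ hμ γ hγ φ hφ
end

section
/- Suppose (a,b) solves i(a_T + n a_X) = w b + σ(|a|² + 2|b|²)a and i(b_T − n b_X) = w a + σ(2|a|² + |b|²)b. Let |c| < n, and define new variables via the Lorentz transformation ξ = (X − cT)/√(n² − c²), τ = (T − cX)/√(n² − c²), and set a = ((n+c)/(n−c))^{1/4} A(ξ) e^{−iμnτ}, b = ((n−c)/(n+c))^{1/4} B(ξ) e^{−iμnτ}. Then (A, B) satisfy (n−c)(iA' − wB) + μn(1 − cn)A = σ[(n+c)|A|² + 2(n−c)|B|²]A and −(n+c)(iB' + wA) + μn(1 + cn)B = σ[2(n+c)|A|² + (n−c)|B|²]B. -/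
/-!
Along the boost, `∂_T + v ∂_X` acts on `κ A(ξ) e^{kτ}` as
`κ ((v - c) A'(ξ) + k (1 - c v) A(ξ)) e^{kτ} / r` with `r = √(n² - c²)`. Evaluate both equations
at `(X, T) = (r s, 0)`, where `ξ = s`: the phase `e^{kτ}` has modulus one and cancels, and the
amplitudes `κ± = ((n ± c)/(n ∓ c))^{1/4}` satisfy `κ₊ κ₋ = 1` and `r κ±² = n ± c`, which turns the
coefficients `r κ∓ / κ±` and `r κ±²` of the coupling and nonlinear terms into `n ∓ c` and `n ± c`.
-/

open Complex

theorem div_rpow_mul_div_rpow_swap {x y : ℝ} (hx : 0 < x) (hy : 0 < y) (p : ℝ) :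
    (x / y) ^ p * (y / x) ^ p = 1 := by
  rw [← Real.mul_rpow (by positivity) (by positivity), div_mul_div_cancel₀', div_self hy.ne',
    Real.one_rpow]
  exact hx.ne'

theorem sqrt_sq_sub_sq_mul_div_rpow_quarter_sq {v c : ℝ} (hc : |c| < v) :
    √(v ^ 2 - c ^ 2) * (((v + c) / (v - c)) ^ (1 / 4 : ℝ)) ^ 2 = v + c := by
  obtain ⟨hcl, hcr⟩ := abs_lt.mp hc
  have hp : 0 < v + c := by linarith
  have hm : 0 < v - c := by linarith
  rw [← Real.rpow_mul_natCast (by positivity), show (1 / 4 : ℝ) * (2 : ℕ) = 1 / 2 by norm_num,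
    ← Real.sqrt_eq_rpow, ← Real.sqrt_mul (by nlinarith),
    show (v ^ 2 - c ^ 2) * ((v + c) / (v - c)) = (v + c) ^ 2 by field_simp; ring,
    Real.sqrt_sq hp.le]

theorem norm_ofReal_mul_mul_cexp_mul_ofReal {κ : ℝ} (hκ : 0 ≤ κ) {k : ℂ} (hk : k.re = 0) (z : ℂ)
    (t : ℝ) : ‖(κ : ℂ) * z * cexp (k * t)‖ = κ * ‖z‖ := by
  rw [norm_mul, norm_mul, Complex.norm_exp, re_mul_ofReal, hk, zero_mul, Real.exp_zero, mul_one,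
    norm_real, Real.norm_of_nonneg hκ]

theorem hasDerivAt_const_mul_comp_mul_cexp {A : ℝ → ℂ} {f g : ℝ → ℝ} {f' g' t : ℝ} (κ k : ℂ)
    (hA : DifferentiableAt ℝ A (f t)) (hf : HasDerivAt f f' t) (hg : HasDerivAt g g' t) :
    HasDerivAt (fun t => κ * A (f t) * cexp (k * g t))
      (κ * (f' * deriv A (f t) + k * g' * A (f t)) * cexp (k * g t)) t := by
  have hAf : HasDerivAt (fun t => A (f t)) (f' • deriv A (f t)) t := hA.hasDerivAt.scomp t hf
  have hexp : HasDerivAt (fun t => cexp (k * g t)) (cexp (k * g t) * (k * g')) t :=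
    (hg.ofReal_comp.const_mul k).cexp
  exact ((hAf.const_mul κ).mul hexp).congr_deriv (by rw [real_smul]; ring)

theorem mul_deriv_add_mul_deriv_of_boost {A : ℝ → ℂ} {ξ τ : ℝ → ℝ → ℝ} {u : ℝ → ℝ → ℂ}
    {c r : ℝ} {κ k : ℂ} (hA : Differentiable ℝ A)
    (hξ : ∀ X T, ξ X T = (X - c * T) / r) (hτ : ∀ X T, τ X T = (T - c * X) / r)
    (hu : ∀ X T, u X T = κ * A (ξ X T) * cexp (k * τ X T)) (hr : r ≠ 0) (v : ℂ) (X T : ℝ) :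
    (r : ℂ) * (deriv (fun T' => u X T') T + v * deriv (fun X' => u X' T) X) =
      κ * ((v - c) * deriv A (ξ X T) + k * (1 - c * v) * A (ξ X T)) * cexp (k * τ X T) := by
  have hT : HasDerivAt (fun T' => u X T')
      (κ * ((-c / r : ℝ) * deriv A (ξ X T) + k * (1 / r : ℝ) * A (ξ X T)) * cexp (k * τ X T))
      T := by
    simp_rw [hu]
    refine hasDerivAt_const_mul_comp_mul_cexp κ k (hA _) ?_ ?_
    · rw [show ξ X = fun T' => (X - c * T') / r from funext (hξ X)]
      exact ((((hasDerivAt_id T).const_mul c).const_sub X).div_const r).congr_deriv (by ring)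
    · rw [show τ X = fun T' => (T' - c * X) / r from funext (hτ X)]
      exact (((hasDerivAt_id T).sub_const _).div_const r).congr_deriv (by ring)
  have hX : HasDerivAt (fun X' => u X' T)
      (κ * ((1 / r : ℝ) * deriv A (ξ X T) + k * (-c / r : ℝ) * A (ξ X T)) * cexp (k * τ X T))
      X := by
    simp_rw [hu]
    refine hasDerivAt_const_mul_comp_mul_cexp κ k (hA _) ?_ ?_
    · rw [show (fun X' => ξ X' T) = fun X' => (X' - c * T) / r from funext (hξ · T)]
      exact (((hasDerivAt_id X).sub_const _).div_const r).congr_deriv (by ring)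
    · rw [show (fun X' => τ X' T) = fun X' => (T - c * X') / r from funext (hτ · T)]
      exact ((((hasDerivAt_id X).const_mul c).const_sub T).div_const r).congr_deriv (by ring)
  rw [hT.deriv, hX.deriv]
  have hr' : (r : ℂ) ≠ 0 := ofReal_ne_zero.mpr hr
  push_cast
  field_simp
  ring

theorem stmt_13 (n : ℕ) (c : ℝ) (hc : |c| < n) (w σ μ : ℝ)
    (A B : ℝ → ℂ) (hA : Differentiable ℝ A) (hB : Differentiable ℝ B)
    (ξ τ : ℝ → ℝ → ℝ)
    (hξ : ∀ X T : ℝ, ξ X T = (X - c * T) / Real.sqrt ((n : ℝ)^2 - c^2))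
    (hτ : ∀ X T : ℝ, τ X T = (T - c * X) / Real.sqrt ((n : ℝ)^2 - c^2))
    (a b : ℝ → ℝ → ℂ)
    (ha : ∀ X T : ℝ, a X T = ((((n : ℝ) + c) / ((n : ℝ) - c)) ^ ((1 : ℝ)/4) : ℝ) *
      A (ξ X T) * Complex.exp (-I * (μ : ℂ) * (n : ℂ) * (τ X T : ℂ)))
    (hb : ∀ X T : ℝ, b X T = ((((n : ℝ) - c) / ((n : ℝ) + c)) ^ ((1 : ℝ)/4) : ℝ) *
      B (ξ X T) * Complex.exp (-I * (μ : ℂ) * (n : ℂ) * (τ X T : ℂ)))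
    (heqa : ∀ X T : ℝ,
      I * (deriv (fun T' => a X T') T + (n : ℂ) * deriv (fun X' => a X' T) X) =
        (w : ℂ) * b X T +
          (σ : ℂ) * ((‖a X T‖^2 + 2 * ‖b X T‖^2 : ℝ) : ℂ) * a X T)
    (heqb : ∀ X T : ℝ,
      I * (deriv (fun T' => b X T') T - (n : ℂ) * deriv (fun X' => b X' T) X) =
        (w : ℂ) * a X T +
          (σ : ℂ) * ((2 * ‖a X T‖^2 + ‖b X T‖^2 : ℝ) : ℂ) * b X T) :
    ∀ s : ℝ,
      (((n : ℝ) - c : ℝ) : ℂ) * (I * deriv A s - (w : ℂ) * B s) +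
          ((μ * n * (1 - c * n) : ℝ) : ℂ) * A s =
        (σ : ℂ) * ((((n : ℝ) + c) * ‖A s‖^2 + 2 * ((n : ℝ) - c) * ‖B s‖^2 : ℝ) : ℂ) * A s ∧
      -((((n : ℝ) + c : ℝ)) : ℂ) * (I * deriv B s + (w : ℂ) * A s) +
          ((μ * n * (1 + c * n) : ℝ) : ℂ) * B s =
        (σ : ℂ) * ((2 * ((n : ℝ) + c) * ‖A s‖^2 + ((n : ℝ) - c) * ‖B s‖^2 : ℝ) : ℂ) * B s := by
  intro s
  obtain ⟨hcl, hcr⟩ := abs_lt.mp hc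
  have hp : 0 < (n : ℝ) + c := by linarith
  have hm : 0 < (n : ℝ) - c := by linarith
  have hra := sqrt_sq_sub_sq_mul_div_rpow_quarter_sq hc
  have hrb := sqrt_sq_sub_sq_mul_div_rpow_quarter_sq (c := -c) (by rwa [abs_neg])
  rw [neg_sq, ← sub_eq_add_neg, sub_neg_eq_add] at hrb
  have hκ := div_rpow_mul_div_rpow_swap hp hm (1 / 4)
  have hr : √((n : ℝ) ^ 2 - c ^ 2) ≠ 0 := left_ne_zero_of_mul (hra ▸ hp.ne')
  set r := √((n : ℝ) ^ 2 - c ^ 2)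
  set κa := (((n : ℝ) + c) / ((n : ℝ) - c)) ^ (1 / 4 : ℝ)
  set κb := (((n : ℝ) - c) / ((n : ℝ) + c)) ^ (1 / 4 : ℝ)
  have hκa : 0 < κa := by positivity
  have hκb : 0 < κb := by positivity
  have hξs : ξ (r * s) 0 = s := by rw [hξ, mul_zero, sub_zero, mul_div_cancel_left₀ _ hr]
  have hk : (-I * (μ : ℂ) * (n : ℂ)).re = 0 := by simp
  have ta := mul_deriv_add_mul_deriv_of_boost hA hξ hτ ha hr n (r * s) 0
  have tb := mul_deriv_add_mul_deriv_of_boost hB hξ hτ hb hr (-n) (r * s) 0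
  have eqa := heqa (r * s) 0
  have eqb := heqb (r * s) 0
  rw [ha (r * s) 0, hb (r * s) 0, norm_ofReal_mul_mul_cexp_mul_ofReal hκa.le hk,
    norm_ofReal_mul_mul_cexp_mul_ofReal hκb.le hk, hξs] at eqa eqb
  rw [hξs] at ta tb
  set e := cexp (-I * μ * n * τ (r * s) 0)
  have he : e ≠ 0 := exp_ne_zero _
  have hκ' : (κa : ℂ) * κb = 1 := by exact_mod_cast hκ
  have hra' : (r : ℂ) * κa ^ 2 = n + c := by exact_mod_cast hra
  have hrb' : (r : ℂ) * κb ^ 2 = n - c := by exact_mod_cast hrb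
  push_cast at eqa eqb ta tb ⊢
  constructor
  · apply mul_left_cancel₀ (mul_ne_zero (ofReal_ne_zero.mpr hκa.ne') he)
    linear_combination r * eqa - I * ta - w * B s * e * r * κb * hκ'
      + (w * B s * e * κa + 2 * σ * ‖B s‖ ^ 2 * A s * κa * e) * hrb'
      + σ * ‖A s‖ ^ 2 * A s * κa * e * hra' + μ * n * (1 - c * n) * κa * A s * e * I_sq
  · apply mul_left_cancel₀ (mul_ne_zero (ofReal_ne_zero.mpr hκb.ne') he)
    linear_combination r * eqb - I * tb - w * A s * e * r * κa * hκ'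
      + (w * A s * e * κb + 2 * σ * ‖A s‖ ^ 2 * B s * κb * e) * hra'
      + σ * ‖B s‖ ^ 2 * B s * κb * e * hrb' + μ * n * (1 + c * n) * κb * B s * e * I_sq
end

section
/- Let A, B : ℝ → ℂ solve (n−c)(iA' − wB) + μn(1−cn)A = σ[(n+c)|A|² + 2(n−c)|B|²]A and −(n+c)(iB' + wA) + μn(1+cn)B = σ[2(n+c)|A|² + (n−c)|B|²]B, with 0 < c < n. Then |A(ξ)|² − |B(ξ)|² is constant in ξ. -/
open Complex

theorem stmt_14 (n : ℕ) (c : ℝ) (hc1 : 0 < c) (hc2 : c < n) (w μ σ : ℝ)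
    (A B : ℝ → ℂ) (hA : Differentiable ℝ A) (hB : Differentiable ℝ B)
    (heqA : ∀ ξ : ℝ,
      (((n : ℝ) - c : ℝ) : ℂ) * (I * deriv A ξ - (w : ℂ) * B ξ) +
          ((μ * n * (1 - c * n) : ℝ) : ℂ) * A ξ =
        (σ : ℂ) * ((((n : ℝ) + c) * ‖A ξ‖^2 + 2 * ((n : ℝ) - c) * ‖B ξ‖^2 : ℝ) : ℂ) * A ξ)
    (heqB : ∀ ξ : ℝ,
      -((((n : ℝ) + c : ℝ)) : ℂ) * (I * deriv B ξ + (w : ℂ) * A ξ) +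
          ((μ * n * (1 + c * n) : ℝ) : ℂ) * B ξ =
        (σ : ℂ) * ((2 * ((n : ℝ) + c) * ‖A ξ‖^2 + ((n : ℝ) - c) * ‖B ξ‖^2 : ℝ) : ℂ) * B ξ) :
    ∀ ξ : ℝ, ‖A ξ‖^2 - ‖B ξ‖^2 = ‖A 0‖^2 - ‖B 0‖^2 := by
  have hnc : ((n : ℝ) - c) ≠ 0 := by linarith
  have hpc : ((n : ℝ) + c) ≠ 0 := by positivity
  have hAkey : ∀ ξ : ℝ, (A ξ).re * (deriv A ξ).re + (A ξ).im * (deriv A ξ).im =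
      w * ((A ξ).re * (B ξ).im - (A ξ).im * (B ξ).re) := by
    intro ξ
    have hre := congrArg Complex.re (heqA ξ)
    have him := congrArg Complex.im (heqA ξ)
    simp only [Complex.add_re, Complex.add_im, Complex.mul_re, Complex.mul_im,
      Complex.sub_re, Complex.sub_im, Complex.I_re, Complex.I_im,
      Complex.ofReal_re, Complex.ofReal_im] at hre him
    have hmul : ((n : ℝ) - c) * ((A ξ).re * (deriv A ξ).re + (A ξ).im * (deriv A ξ).im) =
        ((n : ℝ) - c) * (w * ((A ξ).re * (B ξ).im - (A ξ).im * (B ξ).re)) := by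
      linear_combination (A ξ).re * him - (A ξ).im * hre
    exact mul_left_cancel₀ hnc hmul
  have hBkey : ∀ ξ : ℝ, (B ξ).re * (deriv B ξ).re + (B ξ).im * (deriv B ξ).im =
      w * ((A ξ).re * (B ξ).im - (A ξ).im * (B ξ).re) := by
    intro ξ
    have hre := congrArg Complex.re (heqB ξ)
    have him := congrArg Complex.im (heqB ξ)
    simp only [Complex.add_re, Complex.add_im, Complex.mul_re, Complex.mul_im,
      Complex.neg_re, Complex.neg_im, Complex.I_re, Complex.I_im,
      Complex.ofReal_re, Complex.ofReal_im] at hre him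
    have hmul : ((n : ℝ) + c) * ((B ξ).re * (deriv B ξ).re + (B ξ).im * (deriv B ξ).im) =
        ((n : ℝ) + c) * (w * ((A ξ).re * (B ξ).im - (A ξ).im * (B ξ).re)) := by
      linear_combination (B ξ).im * hre - (B ξ).re * him
    exact mul_left_cancel₀ hpc hmul
  have hfun : (fun ξ => ‖A ξ‖^2 - ‖B ξ‖^2) =
      (fun ξ => ((A ξ).re^2 + (A ξ).im^2) - ((B ξ).re^2 + (B ξ).im^2)) := by
    funext ξ
    have h1 : ∀ z : ℂ, ‖z‖^2 = z.re^2 + z.im^2 := by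
      intro z
      rw [Complex.sq_norm, Complex.normSq_apply]
      ring
    rw [h1, h1]
  have key : ∀ ξ : ℝ, HasDerivAt (fun ξ => ‖A ξ‖^2 - ‖B ξ‖^2) 0 ξ := by
    intro ξ
    have hAre : HasDerivAt (fun ξ => (A ξ).re) ((deriv A ξ).re) ξ :=
      Complex.reCLM.hasFDerivAt.comp_hasDerivAt ξ (hA ξ).hasDerivAt
    have hAim : HasDerivAt (fun ξ => (A ξ).im) ((deriv A ξ).im) ξ :=
      Complex.imCLM.hasFDerivAt.comp_hasDerivAt ξ (hA ξ).hasDerivAt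
    have hBre : HasDerivAt (fun ξ => (B ξ).re) ((deriv B ξ).re) ξ :=
      Complex.reCLM.hasFDerivAt.comp_hasDerivAt ξ (hB ξ).hasDerivAt
    have hBim : HasDerivAt (fun ξ => (B ξ).im) ((deriv B ξ).im) ξ :=
      Complex.imCLM.hasFDerivAt.comp_hasDerivAt ξ (hB ξ).hasDerivAt
    have h1 := ((hAre.pow 2).add (hAim.pow 2)).sub ((hBre.pow 2).add (hBim.pow 2))
    rw [hfun]
    convert h1 using 1
    · rfl
    · rfl
    · rfl
    have := hAkey ξ
    have := hBkey ξ
    push_cast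
    ring_nf
    nlinarith [hAkey ξ, hBkey ξ]
  have hconst := is_const_of_deriv_eq_zero (f := fun ξ => ‖A ξ‖^2 - ‖B ξ‖^2)
    (fun x => (key x).differentiableAt) (fun x => (key x).deriv)
  intro ξ
  exact hconst ξ 0
end
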